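/- For the modified tent map f with h > 2 and δ ≥ 0, every point x in [δ, 2+δ] is mapped under f into [0, h] ; moreover the set of points whose entire forward orbit stays in the interval [δ, 1+δ] ∪ [1+δ, 2+δ] where f(x) ≥ δ (i.e. never falls into the flat region [0,δ)) has Lebesgue measure zero, so Lebesgue-almost every initial condition in [0, 2+δ] eventually reaches the fixed point 0. -/

import Mathlib

/-!
A point whose orbit never enters the flat region `x < δ` stays in `[δ, 2 + δ]` and is mapped
there by one of the two affine branches `x ↦ h (x - δ)` and `x ↦ -h (x - (2 + δ))`. Hence the
set `S` of such points lies in the union of the preimages of `S` under these branches, each of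
measure `volume S / h`, so `volume S ≤ (2 / h) volume S`; as `2 / h < 1` and `S` is bounded,
`volume S = 0`. Every other point of `[0, 2 + δ]` is sent to `0` one step after its orbit drops
below `δ`.
-/

open MeasureTheory

/-- The modified tent map with slope `h` and offset `δ`. -/
noncomputable def tentMap (h δ : ℝ) (x : ℝ) : ℝ :=
  if δ ≤ x ∧ x < 1 + δ then h * (x - δ)
  else if 1 + δ ≤ x then -h * (x - 2 - δ)
  else 0

open Set Function

lemma ENNReal.eq_zero_of_le_mul_of_lt_one {a c : ENNReal} (ha : a ≠ ⊤) (hc : c < 1)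
    (hle : a ≤ c * a) : a = 0 := by
  by_contra ha0
  have : c * a < 1 * a := ENNReal.mul_lt_mul_left ha0 ha hc
  rw [one_mul] at this
  exact (hle.trans_lt this).false

lemma Real.volume_preimage_mul_sub {a : ℝ} (ha : a ≠ 0) (b : ℝ) (s : Set ℝ) :
    volume ((fun x => a * (x - b)) ⁻¹' s) = ENNReal.ofReal |a⁻¹| * volume s := by
  change volume ((· + -b) ⁻¹' ((a * ·) ⁻¹' s)) = _
  rw [measure_preimage_add_right, Real.volume_preimage_mul_left ha]

section TentMap

variable {h δ x : ℝ}

lemma tentMap_of_lt (hx : x < δ) : tentMap h δ x = 0 := by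
  have : ¬ 1 + δ ≤ x := by linarith
  simp [tentMap, hx.not_ge, this]

lemma tentMap_of_mem_Ico (hx : x ∈ Ico δ (1 + δ)) : tentMap h δ x = h * (x - δ) :=
  if_pos hx

lemma tentMap_of_le (hx : 1 + δ ≤ x) : tentMap h δ x = -h * (x - (2 + δ)) := by
  rw [tentMap, if_neg fun hx' => hx.not_gt hx'.2, if_pos hx]
  ring

lemma tentMap_mem_Icc (hh : 0 ≤ h) (hx : x ∈ Icc δ (2 + δ)) : tentMap h δ x ∈ Icc 0 h := by
  obtain ⟨hδx, hx2⟩ := hx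
  rcases lt_or_ge x (1 + δ) with hx1 | hx1
  · rw [tentMap_of_mem_Ico ⟨hδx, hx1⟩]
    constructor <;> nlinarith
  · rw [tentMap_of_le hx1]
    constructor <;> nlinarith

def tentSurvivors (h δ : ℝ) : Set ℝ :=
  {x ∈ Icc δ (2 + δ) | ∀ n : ℕ, δ ≤ (tentMap h δ)^[n] x}

lemma mapsTo_tentSurvivors (hh : 0 < h) (hδ : 0 ≤ δ) :
    MapsTo (tentMap h δ) (tentSurvivors h δ) (tentSurvivors h δ) := by
  rintro x ⟨-, horb⟩
  have hδfx : δ ≤ tentMap h δ x := horb 1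
  have hδffx : δ ≤ tentMap h δ (tentMap h δ x) := horb 2
  -- beyond `2 + δ` the right branch is negative, so the orbit would drop below `δ ≥ 0`
  have hfx : tentMap h δ x ≤ 2 + δ := by
    by_contra! hfx
    rw [tentMap_of_le (by linarith)] at hδffx
    nlinarith
  exact ⟨⟨hδfx, hfx⟩, fun n => horb (n + 1)⟩

lemma tentSurvivors_subset_preimage_branches (hh : 0 < h) (hδ : 0 ≤ δ) :
    tentSurvivors h δ ⊆ (fun x => h * (x - δ)) ⁻¹' tentSurvivors h δ ∪
      (fun x => -h * (x - (2 + δ))) ⁻¹' tentSurvivors h δ := by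
  intro x hx
  have hfx := mapsTo_tentSurvivors hh hδ hx
  rcases lt_or_ge x (1 + δ) with hx1 | hx1
  · left
    rwa [tentMap_of_mem_Ico ⟨hx.1.1, hx1⟩] at hfx
  · right
    rwa [tentMap_of_le hx1] at hfx

lemma volume_tentSurvivors (hh : 2 < h) (hδ : 0 ≤ δ) : volume (tentSurvivors h δ) = 0 := by
  have hh0 : 0 < h := by linarith
  set S := tentSurvivors h δ
  have hS : volume S ≠ ⊤ :=
    ne_top_of_le_ne_top (by simp) (measure_mono fun x (hx : x ∈ S) => hx.1)
  refine ENNReal.eq_zero_of_le_mul_of_lt_one hS (c := ENNReal.ofReal (2 / h)) ?_ ?_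
  · rw [ENNReal.ofReal_lt_one, div_lt_one hh0]
    exact hh
  calc volume S
      ≤ volume ((fun x => h * (x - δ)) ⁻¹' S) +
          volume ((fun x => -h * (x - (2 + δ))) ⁻¹' S) :=
        (measure_mono (tentSurvivors_subset_preimage_branches hh0 hδ)).trans
          (measure_union_le _ _)
    _ = ENNReal.ofReal (h⁻¹ + h⁻¹) * volume S := by
        rw [Real.volume_preimage_mul_sub hh0.ne',
          Real.volume_preimage_mul_sub (neg_ne_zero.2 hh0.ne'), inv_neg, abs_neg,
          abs_of_pos (inv_pos.2 hh0), ← add_mul,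
          ENNReal.ofReal_add (inv_nonneg.2 hh0.le) (inv_nonneg.2 hh0.le)]
    _ = ENNReal.ofReal (2 / h) * volume S := by
        congr 2
        ring

lemma mem_tentSurvivors_of_forall_iterate_ne_zero (hx : x ≤ 2 + δ)
    (hne : ∀ n : ℕ, (tentMap h δ)^[n + 1] x ≠ 0) : x ∈ tentSurvivors h δ := by
  have horb : ∀ n : ℕ, δ ≤ (tentMap h δ)^[n] x := fun n => by
    by_contra! hn
    exact hne n (by rw [iterate_succ_apply', tentMap_of_lt hn])
  exact ⟨⟨horb 0, hx⟩, horb⟩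

end TentMap

theorem tentMap_almost_all_escape (h δ : ℝ) (hh : 2 < h) (hδ : 0 ≤ δ) :
    -- f maps [δ, 2+δ] into [0, h]
    (∀ x ∈ Set.Icc δ (2 + δ), tentMap h δ x ∈ Set.Icc 0 h) ∧
    -- the set of points whose orbit never falls below δ has measure zero
    volume {x ∈ Set.Icc δ (2 + δ) | ∀ n : ℕ, δ ≤ (tentMap h δ)^[n] x} = 0 ∧
    -- consequently a.e. x in [0, 2+δ] eventually reaches the fixed point 0
    (∀ᵐ x ∂(volume.restrict (Set.Icc 0 (2 + δ))),
      ∃ n : ℕ, (tentMap h δ)^[n + 1] x = 0) := by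
  have hnull : volume (tentSurvivors h δ) = 0 := volume_tentSurvivors hh hδ
  refine ⟨fun x hx => tentMap_mem_Icc (by linarith) hx, hnull, ?_⟩
  rw [ae_restrict_iff' measurableSet_Icc, ae_iff]
  refine measure_mono_null (fun x hx => ?_) hnull
  simp only [mem_ofPred_eq, Classical.not_imp, not_exists] at hx
  exact mem_tentSurvivors_of_forall_iterate_ne_zero hx.1.2 hx.2
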